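/- Let n be a natural number with prime factorisation n = p_1^{α_1} ⋯ p_t^{α_t} (the p_i distinct primes). Then every skew brace of order n is weakly trivial if and only if α_i = 1 for every i and p_i does not divide p_j − 1 for all i ≠ j. -/

import Mathlib

/-- A skew (left) brace: a set with two group structures `(A,+)` and `(A,∘)`
(the latter written multiplicatively) satisfying
`a ∘ (b + c) = a ∘ b - a + a ∘ c`. -/
class SkewBrace (A : Type*) extends AddGroup A, Group A where
  skew_left_distrib : ∀ a b c : A, a * (b + c) = a * b - a + a * c

/-- The derived ideal `A² = A ∗ A`: the subgroup of `(A,+)` generated by the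
star products `a ∗ b = -a + a ∘ b - b`. -/
def derivedIdeal (A : Type*) [SkewBrace A] : AddSubgroup A :=
  AddSubgroup.closure {x : A | ∃ a b : A, x = -a + a * b - b}

/-- The derived ideal of the opposite skew brace `A_op = (A, +_op, ∘)`:
as a subset of `A`, it is the subgroup of `(A,+)` generated by the opposite
star products `a ∗_op b = -b + a ∘ b - a` (a set is a subgroup of `(A,+_op)`
iff it is a subgroup of `(A,+)`). -/
def oppositeDerivedIdeal (A : Type*) [SkewBrace A] : AddSubgroup A :=
  AddSubgroup.closure {x : A | ∃ a b : A, x = -b + a * b - a}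

/-- A skew brace is weakly trivial if `A² ∩ A_op² = {0}`. -/
def IsWeaklyTrivial (A : Type*) [SkewBrace A] : Prop :=
  derivedIdeal A ⊓ oppositeDerivedIdeal A = ⊥


/-! If `n` is squarefree and no prime factor `p` of `n` divides `q - 1` for another prime factor
`q`, then `gcd(n, φ(n)) = 1`, and every group of order `n` is cyclic: it is a Z-group whose
cyclic commutator subgroup is central because its automorphism group has order prime to `n`.
So `(A, +)` is cyclic, `|Aut(A, +)| = φ(n)` is prime to `n = |(A, ∘)|`, and the homomorphism
`λ : (A, ∘) → Aut(A, +)`, `λ_a(b) = -a + a ∘ b`, is trivial: `a ∘ b = a + b`, hence `A² = 0`.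

Conversely, when `(A, +)` is abelian the star products of `A` and `A_op` coincide, so a weakly
trivial brace is trivial. Braces `a ∘ b = a + u(a) b` on rings, with `u` a nontrivial unit-valued
cocycle, then give counterexamples: `u(a) = 1 + (n / p) a` on `ℤ/n` when `p² ∣ n`, and
`u(x, y) = (g ^ y, 1)` on `ℤ/q × ℤ/(n/q)` with `g` of order `p` in `(ℤ/q)ˣ` when `p ∣ q - 1`. -/

theorem Nat.squarefree_of_coprime_totient {n : ℕ} (h : n.Coprime n.totient) : Squarefree n := by
  refine Nat.squarefree_iff_prime_squarefree.mpr fun p hp hpp => ?_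
  have hp_dvd_totient : p ∣ n.totient := by
    have := Nat.totient_dvd_of_dvd hpp
    rw [Nat.totient_mul_of_prime_of_dvd hp dvd_rfl] at this
    exact (dvd_mul_right p _).trans this
  exact hp.one_lt.ne' (Nat.eq_one_of_dvd_coprimes h (dvd_of_mul_right_dvd hpp) hp_dvd_totient)

theorem Nat.coprime_totient_of_factorization {n : ℕ} (hn : n ≠ 0)
    (hsq : ∀ p ∈ n.primeFactors, n.factorization p = 1)
    (hdvd : ∀ p ∈ n.primeFactors, ∀ q ∈ n.primeFactors, p ≠ q → ¬ p ∣ q - 1) :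
    n.Coprime n.totient := by
  refine Nat.coprime_of_dvd fun p hp hpn hpφ => ?_
  have hp' : p ∈ n.primeFactors := Nat.mem_primeFactors.mpr ⟨hp, hpn, hn⟩
  rw [Nat.totient_eq_prod_factorization hn, Finsupp.prod, Nat.support_factorization] at hpφ
  obtain ⟨q, hq, hpq⟩ := (Prime.dvd_finsetProd_iff hp.prime _).mp hpφ
  rw [hsq q hq, Nat.sub_self, pow_zero, one_mul] at hpq
  obtain rfl | hne := eq_or_ne p q
  · exact Nat.not_dvd_of_pos_of_lt (Nat.sub_pos_of_lt hp.one_lt) (Nat.sub_lt hp.pos one_pos) hpq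
  · exact hdvd p hp' q hq hne hpq

theorem Subgroup.le_center_of_coprime_card_totient {G : Type*} [Group G] [Finite G]
    (N : Subgroup G) [N.Normal] [IsCyclic N] (h : (Nat.card G).Coprime (Nat.card N).totient) :
    N ≤ Subgroup.center G := by
  intro x hx
  refine Subgroup.mem_center_iff.mpr fun g => ?_
  have hconj : MulAut.conjNormal g = (1 : MulAut N) := by
    refine orderOf_eq_one_iff.mp (Nat.eq_one_of_dvd_coprimes h ?_ ?_)
    · exact (orderOf_map_dvd _ g).trans (_root_.orderOf_dvd_natCard g)
    · exact IsCyclic.card_mulAut N ▸ _root_.orderOf_dvd_natCard _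
  have := congrArg Subtype.val (DFunLike.congr_fun hconj ⟨x, hx⟩)
  simp only [MulAut.conjNormal_apply, MulAut.one_apply] at this
  rw [← mul_inv_eq_iff_eq_mul, this]

open scoped IsMulCommutative in
theorem isCyclic_of_coprime_card_totient {G : Type*} [Group G]
    (h : (Nat.card G).Coprime (Nat.card G).totient) : IsCyclic G := by
  have hsq := Nat.squarefree_of_coprime_totient h
  have : Finite G := Nat.finite_of_card_ne_zero hsq.ne_zero
  have : IsZGroup G := IsZGroup.of_squarefree hsq
  have : IsCyclic (commutator G) := IsZGroup.isCyclic_commutator G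
  have hcomm : commutator G ≤ Subgroup.center G :=
    (commutator G).le_center_of_coprime_card_totient
      (h.coprime_dvd_right (Nat.totient_dvd_of_dvd (Subgroup.card_subgroup_dvd_card _)))
  have : IsMulCommutative G :=
    Abelianization.of.isMulCommutative_of_isCyclic_of_ker_le_center
      (by rwa [Abelianization.ker_of])
  exact IsCyclic.of_exponent_eq_card (IsZGroup.exponent_eq_card G)

theorem isAddCyclic_of_coprime_card_totient {A : Type*} [AddGroup A]
    (h : (Nat.card A).Coprime (Nat.card A).totient) : IsAddCyclic A :=
  isCyclic_multiplicative_iff.mp (isCyclic_of_coprime_card_totient h)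

theorem IsAddCyclic.card_addAut (A : Type*) [AddGroup A] [Finite A] [IsAddCyclic A] :
    Nat.card (AddAut A) = (Nat.card A).totient := by
  calc Nat.card (AddAut A) = Nat.card (MulAut (Multiplicative A)) :=
        Nat.card_congr (MulAutMultiplicative A).toEquiv.symm
    _ = (Nat.card A).totient := IsCyclic.card_mulAut (Multiplicative A)

namespace SkewBrace

section

variable {A : Type*} [SkewBrace A]

def lambda (a : A) : AddAut A where
  toFun b := -a + a * b
  invFun b := a⁻¹ * (a + b)
  left_inv b := by simp [← mul_assoc]
  right_inv b := by simp [← mul_assoc]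
  map_add' b c := by simp [skew_left_distrib, sub_eq_add_neg, add_assoc]

def lambdaHom : A →* Multiplicative (AddAut A) :=
  MonoidHom.mk' (fun a => .ofAdd (lambda a)) fun a b => by
    ext x
    calc -(a * b) + a * b * x = -(-a + a * b) + (-a + a * (b * x)) := by
          simp [neg_add_rev, add_assoc, mul_assoc]
      _ = lambda a (-b + b * x) := by
          rw [map_add, map_neg]
          rfl

theorem mul_eq_add_of_coprime (h : (Nat.card A).Coprime (Nat.card (AddAut A))) (a b : A) :
    a * b = a + b := by
  have hlam : lambdaHom a = 1 := by
    refine orderOf_eq_one_iff.mp (Nat.eq_one_of_dvd_coprimes h ?_ (orderOf_dvd_natCard _))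
    exact (orderOf_map_dvd _ a).trans (orderOf_dvd_natCard a)
  exact neg_add_eq_iff_eq_add.mp (DFunLike.congr_fun (Multiplicative.ofAdd.injective hlam) b)

theorem isWeaklyTrivial_of_mul_eq_add (h : ∀ a b : A, a * b = a + b) : IsWeaklyTrivial A := by
  have : derivedIdeal A = ⊥ := by
    refine (AddSubgroup.closure_le _).mpr ?_ |> le_bot_iff.mp
    rintro _ ⟨a, b, rfl⟩
    simp [h]
  rw [IsWeaklyTrivial, this, bot_inf_eq]

theorem mul_eq_add_of_isWeaklyTrivial (hcomm : ∀ a b : A, a + b = b + a) (h : IsWeaklyTrivial A)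
    (a b : A) : a * b = a + b := by
  have hmem : -a + a * b - b ∈ derivedIdeal A ⊓ oppositeDerivedIdeal A := by
    refine ⟨AddSubgroup.subset_closure ⟨a, b, rfl⟩, AddSubgroup.subset_closure ⟨a, b, ?_⟩⟩
    rw [sub_eq_add_neg, sub_eq_add_neg, hcomm (-a), hcomm, add_assoc]
  rwa [h, AddSubgroup.mem_bot, sub_eq_zero, neg_add_eq_iff_eq_add] at hmem

theorem isWeaklyTrivial_of_coprime_card_totient
    (h : (Nat.card A).Coprime (Nat.card A).totient) : IsWeaklyTrivial A := by
  have : IsAddCyclic A := isAddCyclic_of_coprime_card_totient h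
  have : Finite A := Nat.finite_of_card_ne_zero (Nat.squarefree_of_coprime_totient h).ne_zero
  refine isWeaklyTrivial_of_mul_eq_add (mul_eq_add_of_coprime ?_)
  rwa [IsAddCyclic.card_addAut]

end

/-- `hu` says that `u (a ∘ b) = u a * u b`. -/
abbrev ofUnitCocycle {R : Type*} [Ring R] (u : R → Rˣ) (h0 : u 0 = 1)
    (hu : ∀ a b, u (a + u a * b) = u a * u b) : SkewBrace R :=
  have hu_inv (a : R) : u (-(↑(u a)⁻¹ * a)) = (u a)⁻¹ := by
    refine eq_inv_of_mul_eq_one_right ?_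
    rw [← hu, mul_neg, ← mul_assoc, Units.mul_inv, one_mul, add_neg_cancel, h0]
  { (inferInstance : AddGroup R) with
    mul a b := a + u a * b
    npow n a := Nat.rec 0 (fun _ b => b + u b * a) n
    npow_zero _ := rfl
    npow_succ _ _ := rfl
    one := 0
    inv a := -(↑(u a)⁻¹ * a)
    mul_assoc a b c := by
      show a + u a * b + u (a + u a * b) * c = a + u a * (b + u b * c)
      rw [hu, Units.val_mul]
      noncomm_ring
    one_mul a := by
      show 0 + u 0 * a = a
      rw [h0, Units.val_one, zero_add, one_mul]
    mul_one a := by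
      show a + u a * 0 = a
      rw [mul_zero, add_zero]
    inv_mul_cancel a := by
      show -(↑(u a)⁻¹ * a) + u (-(↑(u a)⁻¹ * a)) * a = 0
      rw [hu_inv, neg_add_cancel]
    skew_left_distrib a b c := by
      show a + u a * (b + c) = a + u a * b - a + (a + u a * c)
      noncomm_ring }

theorem not_isWeaklyTrivial_ofUnitCocycle {R : Type*} [Ring R] {u : R → Rˣ} (h0 : u 0 = 1)
    (hu : ∀ a b, u (a + u a * b) = u a * u b) {a : R} (ha : u a ≠ 1) :
    ¬ @IsWeaklyTrivial R (ofUnitCocycle u h0 hu) := by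
  let _ : SkewBrace R := ofUnitCocycle u h0 hu
  intro h
  have h1 : a + u a * 1 = a + 1 := mul_eq_add_of_isWeaklyTrivial add_comm h a 1
  rw [mul_one, add_right_inj] at h1
  exact ha (Units.val_eq_one.mp h1)

theorem exists_not_isWeaklyTrivial_of_mul_self_eq_zero {R : Type*} [CommRing R] {k : R}
    (hk : k * k = 0) (hk0 : k ≠ 0) : ∃ _ : SkewBrace R, ¬ IsWeaklyTrivial R := by
  let u (a : R) : Rˣ :=
    ⟨1 + k * a, 1 - k * a, by linear_combination (-(a * a)) * hk,
      by linear_combination (-(a * a)) * hk⟩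
  have h0 : u 0 = 1 := Units.ext (by simp [u])
  have hu (a b : R) : u (a + u a * b) = u a * u b :=
    Units.ext (by simp only [u, Units.val_mul]; ring)
  refine ⟨ofUnitCocycle u h0 hu, not_isWeaklyTrivial_ofUnitCocycle h0 hu (a := 1) ?_⟩
  intro h
  exact hk0 (by simpa [u] using congrArg Units.val h)

theorem exists_not_isWeaklyTrivial_prod_zmod {R : Type*} [Ring R] {m : ℕ} [NeZero m] {g : Rˣ}
    (hg : g ^ m = 1) (hg1 : g ≠ 1) :
    ∃ _ : SkewBrace (R × ZMod m), ¬ IsWeaklyTrivial (R × ZMod m) := by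
  have hm : 1 < m := by
    refine lt_of_le_of_ne (NeZero.one_le) fun h => hg1 ?_
    rwa [← h, pow_one] at hg
  have : Fact (1 < m) := ⟨hm⟩
  let u (x : R × ZMod m) : (R × ZMod m)ˣ :=
    Units.map (MonoidHom.inl R (ZMod m)) (g ^ x.2.val)
  have h0 : u 0 = 1 := by simp [u]
  have hu (x y : R × ZMod m) : u (x + u x * y) = u x * u y := by
    simp only [u, ← map_mul, ← pow_add]
    rw [pow_eq_pow_mod (_ + _) hg, ← ZMod.val_add]
    simp
  refine ⟨ofUnitCocycle u h0 hu, not_isWeaklyTrivial_ofUnitCocycle h0 hu (a := (0, 1)) ?_⟩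
  intro h
  exact hg1 (by simpa [u, ZMod.val_one] using congrArg (fun v : (R × ZMod m)ˣ => v.1.1) h)

end SkewBrace

theorem exists_skewBrace_not_isWeaklyTrivial_of_sq_dvd {n p : ℕ} (hn : n ≠ 0) (hp : 1 < p)
    (h : p ^ 2 ∣ n) :
    ∃ (A : Type) (_ : Fintype A) (_ : SkewBrace A),
      Fintype.card A = n ∧ ¬ IsWeaklyTrivial A := by
  obtain ⟨m, rfl⟩ := h
  have : NeZero (p ^ 2 * m) := ⟨hn⟩
  have hm : 0 < m := Nat.pos_of_mul_pos_left (Nat.pos_of_ne_zero hn)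
  let k : ZMod (p ^ 2 * m) := (p * m : ℕ)
  have hk : k * k = 0 := by
    rw [← Nat.cast_mul, show p * m * (p * m) = p ^ 2 * m * m by ring, Nat.cast_mul,
      ZMod.natCast_self, zero_mul]
  have hk0 : k ≠ 0 := by
    rw [Ne, ZMod.natCast_eq_zero_iff]
    refine Nat.not_dvd_of_pos_of_lt (by positivity) ?_
    rw [sq, mul_assoc]
    exact lt_mul_left (by positivity) hp
  obtain ⟨_, hA⟩ := SkewBrace.exists_not_isWeaklyTrivial_of_mul_self_eq_zero hk hk0
  exact ⟨ZMod (p ^ 2 * m), inferInstance, _, ZMod.card _, hA⟩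

theorem exists_skewBrace_not_isWeaklyTrivial_of_dvd_sub_one {n p q : ℕ} (hn : n ≠ 0)
    (hp : p.Prime) (hq : q.Prime) (hne : p ≠ q) (hpq : p ∣ q - 1) (hpn : p ∣ n) (hqn : q ∣ n) :
    ∃ (A : Type) (_ : Fintype A) (_ : SkewBrace A),
      Fintype.card A = n ∧ ¬ IsWeaklyTrivial A := by
  have : Fact q.Prime := ⟨hq⟩
  have : Fact p.Prime := ⟨hp⟩
  obtain ⟨m, rfl⟩ := hqn
  have : NeZero m := ⟨right_ne_zero_of_mul hn⟩
  have hpm : p ∣ m := ((Nat.coprime_primes hp hq).mpr hne).dvd_of_dvd_mul_left hpn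
  obtain ⟨g, hg⟩ := exists_prime_orderOf_dvd_card (G := (ZMod q)ˣ) p (by rwa [ZMod.card_units])
  have hgm : g ^ m = 1 := orderOf_dvd_iff_pow_eq_one.mp (hg ▸ hpm)
  have hg1 : g ≠ 1 := by
    rintro rfl
    exact hp.one_lt.ne (orderOf_one.symm.trans hg)
  obtain ⟨_, hA⟩ := SkewBrace.exists_not_isWeaklyTrivial_prod_zmod hgm hg1
  exact ⟨ZMod q × ZMod m, inferInstance, _, by simp, hA⟩

/-- Every skew brace of order `n` is weakly trivial if and only if `n` is
square-free and `p ∤ q - 1` for all distinct primes `p, q` dividing `n`. -/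
theorem every_skewBrace_is_weakly_trivial_iff (n : ℕ) (hn : 0 < n) :
    (∀ (A : Type) [Fintype A] [SkewBrace A], Fintype.card A = n →
      IsWeaklyTrivial A) ↔
    ((∀ p ∈ n.primeFactors, n.factorization p = 1) ∧
      (∀ p ∈ n.primeFactors, ∀ q ∈ n.primeFactors, p ≠ q → ¬ p ∣ q - 1)) := by
  constructor
  · intro h
    refine ⟨fun p hp => ?_, fun p hp q hq hne hpq => ?_⟩
    · have hp' := Nat.prime_of_mem_primeFactors hp
      have hpos := hp'.factorization_pos_of_dvd hn.ne' (Nat.dvd_of_mem_primeFactors hp)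
      by_contra hne
      obtain ⟨A, _, _, hA, hnot⟩ := exists_skewBrace_not_isWeaklyTrivial_of_sq_dvd hn.ne'
        hp'.one_lt ((hp'.pow_dvd_iff_le_factorization hn.ne').mpr (by omega))
      exact hnot (h A hA)
    · obtain ⟨A, _, _, hA, hnot⟩ := exists_skewBrace_not_isWeaklyTrivial_of_dvd_sub_one hn.ne'
        (Nat.prime_of_mem_primeFactors hp) (Nat.prime_of_mem_primeFactors hq) hne hpq
        (Nat.dvd_of_mem_primeFactors hp) (Nat.dvd_of_mem_primeFactors hq)
      exact hnot (h A hA)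
  · rintro ⟨hsq, hdvd⟩ A _ _ hA
    refine SkewBrace.isWeaklyTrivial_of_coprime_card_totient ?_
    rw [Nat.card_eq_fintype_card, hA]
    exact Nat.coprime_totient_of_factorization hn.ne' hsq hdvd
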